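/- Limits of the excited energy: fix α > 2. Then lim_{ω→0⁺} E*(ω) = 0 and lim_{ω→∞} E*(ω) = +∞. The second limit uses the bound: for any configuration x with center of mass zero, if −U(x) ≤ c then I(x) ≥ (m²/M)(m²/c)^{2/α}, where m = min_i m_i and M = ∑_i m_i. -/

import Mathlib

/- STATEMENT 17: limits of the excited energy: E*(ω) → 0 as ω → 0⁺ and E*(ω) → ∞ as
ω → ∞ (α > 2); together with the bound −U(x) ≤ c → I(x) ≥ (m²/M)(m²/c)^{2/α}. -/

namespace NBodyPaper

open Real

noncomputable section

abbrev E3 := EuclideanSpace ℝ (Fin 3)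

variable {N : ℕ}

/-- The α-homogeneous potential `U(x) = -∑_{i<j} m_i m_j / |x_i - x_j|^α`. -/
def pot (α : ℝ) (m : Fin N → ℝ) (q : Fin N → E3) : ℝ :=
  -∑ i : Fin N, ∑ j ∈ Finset.univ.filter (fun j => i < j), m i * m j / ‖q i - q j‖ ^ α

/-- Moment of inertia `I(x) = ∑ m_i |x_i|²`. -/
def inertia (m : Fin N → ℝ) (q : Fin N → E3) : ℝ := ∑ i, m i * ‖q i‖ ^ 2

/-- Collision-free configuration. -/
def OffDiag (q : Fin N → E3) : Prop := ∀ i j, i ≠ j → q i ≠ q j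

/-- Center of mass at the origin. -/
def comZero (m : Fin N → ℝ) (q : Fin N → E3) : Prop := ∑ i, m i • q i = 0

/-- The threshold function `K_ω(x) = ω² I(x) + α U(x)`. -/
def Kfun (α : ℝ) (m : Fin N → ℝ) (ω : ℝ) (q : Fin N → E3) : ℝ :=
  ω ^ 2 * inertia m q + α * pot α m q

/-- `E_ω(x) = (ω²/2) I(x) + U(x)`. -/
def Eomega (α : ℝ) (m : Fin N → ℝ) (ω : ℝ) (q : Fin N → E3) : ℝ :=
  ω ^ 2 / 2 * inertia m q + pot α m q

/-- The excited energy `E*(ω) = inf { E_ω(x) : K_ω(x) = 0 }`, the infimum taken over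
collision-free configurations with center of mass zero. -/
def Estar (α : ℝ) (m : Fin N → ℝ) (ω : ℝ) : ℝ :=
  sInf {e : ℝ | ∃ q : Fin N → E3, OffDiag q ∧ comZero m q ∧ Kfun α m ω q = 0 ∧ e = Eomega α m ω q}

lemma pot_nonpos (α : ℝ) {m : Fin N → ℝ} (hm : ∀ i, 0 ≤ m i) (q : Fin N → E3) :
    pot α m q ≤ 0 := by
  unfold pot
  rw [neg_nonpos]
  refine Finset.sum_nonneg fun i _ => Finset.sum_nonneg fun j _ => ?_
  exact div_nonneg (mul_nonneg (hm i) (hm j)) (Real.rpow_nonneg (norm_nonneg _) _)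

lemma pair_le_neg_pot (α : ℝ) {m : Fin N → ℝ} (hm : ∀ i, 0 ≤ m i) (q : Fin N → E3)
    {a b : Fin N} (hab : a < b) :
    m a * m b / ‖q a - q b‖ ^ α ≤ -pot α m q := by
  unfold pot
  rw [neg_neg]
  have hterm : ∀ i j : Fin N, 0 ≤ m i * m j / ‖q i - q j‖ ^ α := fun i j =>
    div_nonneg (mul_nonneg (hm i) (hm j)) (Real.rpow_nonneg (norm_nonneg _) _)
  have h1 : m a * m b / ‖q a - q b‖ ^ α ≤
      ∑ j ∈ Finset.univ.filter (fun j => a < j), m a * m j / ‖q a - q j‖ ^ α :=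
    Finset.single_le_sum (fun j _ => hterm a j) (by simp [hab])
  refine h1.trans ?_
  exact Finset.single_le_sum
    (f := fun i => ∑ j ∈ Finset.univ.filter (fun j => i < j), m i * m j / ‖q i - q j‖ ^ α)
    (fun i _ => Finset.sum_nonneg fun j _ => hterm i j) (Finset.mem_univ a)

lemma neg_pot_pos (hN : 2 ≤ N) (α : ℝ) {m : Fin N → ℝ} (hm : ∀ i, 0 < m i)
    {q : Fin N → E3} (hq : OffDiag q) : 0 < -pot α m q := by
  have h0 : (0:ℕ) < N := by omega
  have h1 : (1:ℕ) < N := by omega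
  set a : Fin N := ⟨0, h0⟩
  set b : Fin N := ⟨1, h1⟩
  have hab : a < b := by simp [a, b, Fin.lt_def]
  have hne : q a ≠ q b := hq a b (by simp [a, b, Fin.ext_iff])
  have hr : 0 < ‖q a - q b‖ := by rwa [norm_pos_iff, sub_ne_zero]
  refine lt_of_lt_of_le ?_ (pair_le_neg_pot α (fun i => (hm i).le) q hab)
  exact div_pos (mul_pos (hm a) (hm b)) (Real.rpow_pos_of_pos hr α)

lemma inertia_pos (hN : 2 ≤ N) {m : Fin N → ℝ} (hm : ∀ i, 0 < m i)
    {q : Fin N → E3} (hq : OffDiag q) : 0 < inertia m q := by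
  have h0 : (0:ℕ) < N := by omega
  have h1 : (1:ℕ) < N := by omega
  set a : Fin N := ⟨0, h0⟩
  set b : Fin N := ⟨1, h1⟩
  have hne : q a ≠ q b := hq a b (by simp [a, b, Fin.ext_iff])
  have hor : q a ≠ 0 ∨ q b ≠ 0 := by
    by_contra h
    push_neg at h
    exact hne (h.1.trans h.2.symm)
  apply Finset.sum_pos' (fun i _ => mul_nonneg (hm i).le (sq_nonneg _))
  rcases hor with h | h
  · exact ⟨a, Finset.mem_univ a, mul_pos (hm a) (pow_pos (norm_pos_iff.mpr h) 2)⟩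
  · exact ⟨b, Finset.mem_univ b, mul_pos (hm b) (pow_pos (norm_pos_iff.mpr h) 2)⟩

lemma iInf_pos (hN : 0 < N) {m : Fin N → ℝ} (hm : ∀ i, 0 < m i) : 0 < ⨅ i, m i := by
  haveI : Nonempty (Fin N) := ⟨⟨0, hN⟩⟩
  obtain ⟨i0, -, hmin⟩ := Finset.exists_min_image Finset.univ m ⟨⟨0, hN⟩, Finset.mem_univ _⟩
  exact lt_of_lt_of_le (hm i0) (le_ciInf fun i => hmin i (Finset.mem_univ i))

lemma inertia_pair {m : Fin N → ℝ} (hm : ∀ i, 0 < m i) (q : Fin N → E3)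
    {a b : Fin N} (hab : a ≠ b) :
    (⨅ i, m i) / 2 * ‖q a - q b‖ ^ 2 ≤ inertia m q := by
  haveI : Nonempty (Fin N) := ⟨a⟩
  have hμ : ∀ i, (⨅ j, m j) ≤ m i := fun i => ciInf_le (Finite.bddBelow_range m) i
  have hμ0 : 0 < ⨅ j, m j := iInf_pos a.pos hm
  have h1 : m a * ‖q a‖ ^ 2 + m b * ‖q b‖ ^ 2 ≤ inertia m q := by
    have hs : ∑ i ∈ ({a, b} : Finset (Fin N)), m i * ‖q i‖ ^ 2 ≤ inertia m q :=
      Finset.sum_le_sum_of_subset_of_nonneg (Finset.subset_univ _)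
        (fun i _ _ => mul_nonneg (hm i).le (sq_nonneg _))
    rwa [Finset.sum_pair hab] at hs
  have hd := norm_sub_le (q a) (q b)
  have h2 : ‖q a - q b‖ ^ 2 ≤ (‖q a‖ + ‖q b‖) ^ 2 :=
    pow_le_pow_left₀ (norm_nonneg _) hd 2
  nlinarith [mul_le_mul_of_nonneg_right (hμ a) (sq_nonneg ‖q a‖),
    mul_le_mul_of_nonneg_right (hμ b) (sq_nonneg ‖q b‖),
    mul_nonneg hμ0.le (sub_nonneg.mpr h2),
    mul_nonneg hμ0.le (sq_nonneg (‖q a‖ - ‖q b‖))]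


lemma inertia_smul (m : Fin N → ℝ) (q : Fin N → E3) (c : ℝ) :
    inertia m (fun i => c • q i) = c ^ 2 * inertia m q := by
  unfold inertia
  rw [Finset.mul_sum]
  refine Finset.sum_congr rfl fun i _ => ?_
  rw [norm_smul]
  rw [mul_pow, Real.norm_eq_abs, sq_abs]
  ring

lemma pot_smul (α : ℝ) (m : Fin N → ℝ) (q : Fin N → E3) {c : ℝ} (hc : 0 < c) :
    pot α m (fun i => c • q i) = (c ^ α)⁻¹ * pot α m q := by
  unfold pot
  rw [mul_neg, neg_inj, Finset.mul_sum]
  refine Finset.sum_congr rfl fun i _ => ?_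
  rw [Finset.mul_sum]
  refine Finset.sum_congr rfl fun j _ => ?_
  rw [← smul_sub, norm_smul, Real.norm_eq_abs, abs_of_pos hc,
    Real.mul_rpow hc.le (norm_nonneg _), mul_comm (c ^ α), ← div_div, div_eq_inv_mul (_ / _)]

lemma Eomega_of_K {α : ℝ} {m : Fin N → ℝ} {ω : ℝ} {q : Fin N → E3}
    (hK : Kfun α m ω q = 0) :
    Eomega α m ω q = (α - 2) / 2 * (-pot α m q) := by
  unfold Kfun at hK
  unfold Eomega
  linear_combination hK / 2

lemma inertia_bound (hN : 2 ≤ N) {α : ℝ} (hα : 0 < α) {m : Fin N → ℝ} (hm : ∀ i, 0 < m i)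
    {x : Fin N → E3} (hx : OffDiag x) {c : ℝ} (hc : -pot α m x ≤ c) :
    ((⨅ i, m i) ^ 2 / (∑ i, m i)) * ((⨅ i, m i) ^ 2 / c) ^ (2 / α) ≤ inertia m x := by
  have h0 : (0:ℕ) < N := by omega
  have h1 : (1:ℕ) < N := by omega
  set a : Fin N := ⟨0, h0⟩
  set b : Fin N := ⟨1, h1⟩
  haveI : Nonempty (Fin N) := ⟨a⟩
  have hab : a < b := by simp [a, b, Fin.lt_def]
  have hne : x a ≠ x b := hx a b (by simp [a, b, Fin.ext_iff])
  have hr : 0 < ‖x a - x b‖ := by rwa [norm_pos_iff, sub_ne_zero]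
  set μ := ⨅ i, m i with hμdef
  have hμ0 : 0 < μ := iInf_pos h0 hm
  have hμ : ∀ i, μ ≤ m i := fun i => ciInf_le (Finite.bddBelow_range m) i
  set M := ∑ i, m i with hMdef
  have hM0 : 0 < M := Finset.sum_pos (fun i _ => hm i) ⟨a, Finset.mem_univ a⟩
  set r := ‖x a - x b‖ with hrdef
  have hrα : 0 < r ^ α := Real.rpow_pos_of_pos hr α
  -- μ²/r^α ≤ c
  have h2 : μ ^ 2 / r ^ α ≤ c := by
    refine le_trans ?_ (le_trans (pair_le_neg_pot α (fun i => (hm i).le) x hab) hc)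
    apply (div_le_div_iff_of_pos_right hrα).mpr
    nlinarith [hμ a, hμ b, hμ0]
  have hc0 : 0 < c := lt_of_lt_of_le (div_pos (pow_pos hμ0 2) hrα) h2
  -- μ²/c ≤ r^α
  have h3 : μ ^ 2 / c ≤ r ^ α := by
    rw [div_le_iff₀ hc0]
    rw [div_le_iff₀ hrα] at h2
    linarith [h2]
  -- (μ²/c)^(2/α) ≤ r^2
  have h4 : (μ ^ 2 / c) ^ (2 / α) ≤ r ^ 2 := by
    have := Real.rpow_le_rpow (by positivity) h3 (by positivity : (0:ℝ) ≤ 2 / α)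
    rwa [← Real.rpow_mul hr.le,
      show α * (2 / α) = ((2:ℕ):ℝ) by push_cast; field_simp,
      Real.rpow_natCast] at this
  -- μ²/M ≤ μ/2
  have h5 : μ ^ 2 / M ≤ μ / 2 := by
    have hMm : 2 * μ ≤ M := by
      have hs : ∑ i ∈ ({a, b} : Finset (Fin N)), m i ≤ M :=
        Finset.sum_le_sum_of_subset_of_nonneg (Finset.subset_univ _)
          (fun i _ _ => (hm i).le)
      rw [Finset.sum_pair hab.ne] at hs
      linarith [hμ a, hμ b]
    rw [div_le_div_iff₀ hM0 (by norm_num : (0:ℝ) < 2)]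
    nlinarith
  calc μ ^ 2 / M * (μ ^ 2 / c) ^ (2 / α)
      ≤ μ / 2 * (r ^ 2) := by
        apply mul_le_mul h5 h4 (Real.rpow_nonneg (by positivity) _) (by positivity)
    _ ≤ inertia m x := inertia_pair hm x hab.ne

lemma exists_base (hN : 2 ≤ N) {m : Fin N → ℝ} (hm : ∀ i, 0 < m i) :
    ∃ q : Fin N → E3, OffDiag q ∧ comZero m q := by
  have hM0 : 0 < ∑ i, m i :=
    Finset.sum_pos (fun i _ => hm i) ⟨⟨0, by omega⟩, Finset.mem_univ _⟩
  set e1 : E3 := EuclideanSpace.single 0 1 with he1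
  have he1ne : e1 ≠ 0 := by
    intro h
    have h2 : e1 0 = 0 := by rw [h]; rfl
    rw [he1] at h2
    simp [EuclideanSpace.single_apply] at h2
  set c : ℝ := (∑ j, m j * (j:ℝ)) / (∑ i, m i) with hc
  refine ⟨fun i => ((i:ℝ) - c) • e1, ?_, ?_⟩
  · intro i j hij h
    simp only at h
    have h2 : (((i:ℝ) - c) - ((j:ℝ) - c)) • e1 = 0 := by rw [sub_smul, h, sub_self]
    rcases smul_eq_zero.mp h2 with h3 | h3
    · have : (i:ℝ) = (j:ℝ) := by linarith [sub_eq_zero.mp (by linarith [h3] : ((i:ℝ)-c) - ((j:ℝ)-c) = 0)]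
      have : (i : ℕ) = (j : ℕ) := Nat.cast_injective this
      exact hij (Fin.ext this)
    · exact he1ne h3
  · unfold comZero
    simp only [smul_smul]
    rw [← Finset.sum_smul]
    have hz : ∑ i, m i * ((i:ℝ) - c) = 0 := by
      have : ∑ i, m i * ((i:ℝ) - c) = (∑ i, m i * (i:ℝ)) - (∑ i, m i) * c := by
        rw [Finset.sum_mul]
        rw [← Finset.sum_sub_distrib]
        refine Finset.sum_congr rfl fun i _ => by ring
      rw [this, hc]
      field_simp
      ring
    rw [hz, zero_smul]

/-- **Limits of the excited energy** (`α > 2`, `N ≥ 2`): `E*(ω) → 0` as `ω → 0⁺`,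
`E*(ω) → +∞` as `ω → ∞`, and the inertia bound used for the second limit:
if `−U(x) ≤ c` then `I(x) ≥ (m²/M)(m²/c)^{2/α}` where `m = min_i m_i`, `M = ∑ m_i`. -/
theorem Estar_limits {N : ℕ} (hN : 2 ≤ N) (α : ℝ) (hα : 2 < α)
    (m : Fin N → ℝ) (hm : ∀ i, 0 < m i) :
    Filter.Tendsto (fun ω => Estar α m ω) (nhdsWithin 0 (Set.Ioi 0)) (nhds 0) ∧
    Filter.Tendsto (fun ω => Estar α m ω) Filter.atTop Filter.atTop ∧
    (∀ (x : Fin N → E3), OffDiag x → comZero m x → ∀ c : ℝ, -pot α m x ≤ c →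
      ((⨅ i, m i) ^ 2 / (∑ i, m i)) * ((⨅ i, m i) ^ 2 / c) ^ (2 / α) ≤ inertia m x) := by
  have hα0 : 0 < α := by linarith
  have hα2 : (0:ℝ) < α + 2 := by linarith
  have hα22 : (0:ℝ) < (α - 2) / 2 := by linarith
  obtain ⟨q0, hod0, hcom0⟩ := exists_base hN hm
  set I0 := inertia m q0 with hI0def
  have hI0 : 0 < I0 := inertia_pos hN hm hod0
  set u0 := -pot α m q0 with hu0def
  have hu0 : 0 < u0 := neg_pot_pos hN α hm hod0
  set β : ℝ := 1 / (α + 2) with hβdef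
  have hβ : 0 < β := by positivity
  have hαβ : 0 < α * β := by positivity
  set S : ℝ → Set ℝ := fun ω =>
    {e : ℝ | ∃ q : Fin N → E3, OffDiag q ∧ comZero m q ∧ Kfun α m ω q = 0 ∧
      e = Eomega α m ω q} with hS
  have hEstar : ∀ ω, Estar α m ω = sInf (S ω) := fun _ => rfl
  set g : ℝ → ℝ := fun ω => ω ^ 2 * I0 / (α * u0) with hg
  set f : ℝ → ℝ := fun ω => (α - 2) / 2 * (g ω ^ (α * β) * u0) with hf
  -- witness configuration for each ω > 0
  have hwit : ∀ ω : ℝ, 0 < ω → f ω ∈ S ω := by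
    intro ω hω
    have hgpos : 0 < g ω := by simp only [hg]; positivity
    set lam : ℝ := g ω ^ (-β) with hlam
    have hlampos : 0 < lam := Real.rpow_pos_of_pos hgpos _
    have hod' : OffDiag (fun i => lam • q0 i) := by
      intro i j hij h
      exact hod0 i j hij (smul_right_injective _ hlampos.ne' h)
    have hcom' : comZero m (fun i => lam • q0 i) := by
      unfold comZero
      have hcz : ∑ i, m i • q0 i = 0 := hcom0
      calc ∑ i, m i • lam • q0 i = lam • ∑ i, m i • q0 i := by
            rw [Finset.smul_sum]
            exact Finset.sum_congr rfl fun i _ => smul_comm _ _ _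
        _ = 0 := by rw [hcz, smul_zero]
    have hlamA : (lam ^ α)⁻¹ = g ω ^ (α * β) := by
      rw [hlam, ← Real.rpow_mul hgpos.le, ← Real.rpow_neg hgpos.le]
      congr 1; ring
    have hlam2 : lam ^ 2 = g ω ^ (-(2 * β)) := by
      rw [hlam, ← Real.rpow_natCast (g ω ^ (-β)) 2, ← Real.rpow_mul hgpos.le]
      congr 1; push_cast; ring
    have hpot0 : pot α m q0 = -u0 := by rw [hu0def]; ring
    have hgeq : ω ^ 2 * I0 * g ω ^ (-(2 * β)) = α * u0 * g ω ^ (α * β) := by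
      have hg1 : ω ^ 2 * I0 = g ω * (α * u0) := by
        simp only [hg]; field_simp
      have h2 : g ω ^ ((1:ℝ) + -(2 * β)) = g ω * g ω ^ (-(2 * β)) := by
        rw [Real.rpow_add hgpos, Real.rpow_one]
      have h3 : (1:ℝ) + -(2 * β) = α * β := by
        rw [hβdef]; field_simp
        ring
      calc ω ^ 2 * I0 * g ω ^ (-(2 * β)) = g ω * (α * u0) * g ω ^ (-(2 * β)) := by rw [hg1]
        _ = α * u0 * (g ω * g ω ^ (-(2 * β))) := by ring
        _ = α * u0 * g ω ^ ((1:ℝ) + -(2 * β)) := by rw [h2]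
        _ = α * u0 * g ω ^ (α * β) := by rw [h3]
    have hK' : Kfun α m ω (fun i => lam • q0 i) = 0 := by
      unfold Kfun
      rw [inertia_smul, pot_smul α m q0 hlampos, hpot0, ← hI0def, hlam2, hlamA]
      linear_combination hgeq
    have hE' : Eomega α m ω (fun i => lam • q0 i) = f ω := by
      rw [Eomega_of_K hK', pot_smul α m q0 hlampos, hpot0, hlamA, hf]
      ring
    exact ⟨fun i => lam • q0 i, hod', hcom', hK', hE'.symm⟩
  have hnonneg : ∀ ω : ℝ, ∀ e ∈ S ω, 0 ≤ e := by
    rintro ω e ⟨q, hodq, hcomq, hKq, rfl⟩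
    rw [Eomega_of_K hKq]
    have hp := pot_nonpos α (fun i => (hm i).le) q
    have : 0 ≤ -pot α m q := by linarith
    positivity
  have hbdd : ∀ ω : ℝ, BddBelow (S ω) := fun ω => ⟨0, fun e he => hnonneg ω e he⟩
  have hub : ∀ ω : ℝ, 0 < ω → Estar α m ω ≤ f ω := fun ω hω => by
    rw [hEstar]; exact csInf_le (hbdd ω) (hwit ω hω)
  have hlb0 : ∀ ω : ℝ, 0 < ω → 0 ≤ Estar α m ω := fun ω hω => by
    rw [hEstar]; exact le_csInf ⟨f ω, hwit ω hω⟩ (fun e he => hnonneg ω e he)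
  -- part 1
  have hgtend : Filter.Tendsto g (nhdsWithin 0 (Set.Ioi 0)) (nhds 0) := by
    have hcont : Continuous g := by
      rw [hg]
      exact ((continuous_pow 2).mul continuous_const).div_const _
    have h00 : g 0 = 0 := by simp [hg]
    exact (h00 ▸ hcont.tendsto 0).mono_left nhdsWithin_le_nhds
  have hrtend : Filter.Tendsto (fun x : ℝ => x ^ (α * β)) (nhds 0) (nhds 0) := by
    have h := (Real.continuousAt_rpow_const 0 (α * β) (Or.inr hαβ.le)).tendsto
    rwa [Real.zero_rpow hαβ.ne'] at h
  have hftend : Filter.Tendsto f (nhdsWithin 0 (Set.Ioi 0)) (nhds 0) := by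
    have h := ((hrtend.comp hgtend).mul_const u0).const_mul ((α - 2) / 2)
    simp only [zero_mul, mul_zero] at h
    exact h
  have part1 : Filter.Tendsto (fun ω => Estar α m ω) (nhdsWithin 0 (Set.Ioi 0)) (nhds 0) := by
    refine tendsto_of_tendsto_of_tendsto_of_le_of_le' tendsto_const_nhds hftend ?_ ?_
    · exact Filter.eventually_of_mem self_mem_nhdsWithin fun ω hω => hlb0 ω hω
    · exact Filter.eventually_of_mem self_mem_nhdsWithin fun ω hω => hub ω hω
  -- part 2
  set μ : ℝ := ⨅ i, m i with hμeq
  have hμ0 : 0 < μ := iInf_pos (by omega) hm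
  set Mtot : ℝ := ∑ i, m i with hMeq
  have hM0 : 0 < Mtot := Finset.sum_pos (fun i _ => hm i) ⟨⟨0, by omega⟩, Finset.mem_univ _⟩
  set A : ℝ := μ ^ 2 / Mtot * (μ ^ 2) ^ (2 / α) with hAdef
  have hA0 : 0 < A := by
    have : (0:ℝ) < (μ ^ 2) ^ (2 / α) := Real.rpow_pos_of_pos (by positivity) _
    positivity
  have hLB : ∀ ω : ℝ, 0 < ω → ∀ e ∈ S ω, (α - 2) / 2 * (ω ^ 2 / α * A) ^ (α * β) ≤ e := by
    rintro ω hω e ⟨q, hodq, hcomq, hKq, rfl⟩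
    have hu : 0 < -pot α m q := neg_pot_pos hN α hm hodq
    set u : ℝ := -pot α m q with hu_def
    have hIq : inertia m q = α * u / ω ^ 2 := by
      have hK' : ω ^ 2 * inertia m q + α * pot α m q = 0 := hKq
      rw [eq_div_iff (by positivity : (ω:ℝ) ^ 2 ≠ 0)]
      rw [hu_def]; linarith
    have hIB := inertia_bound hN hα0 hm hodq (hu_def.ge)
    rw [← hμeq, ← hMeq, hIq] at hIB
    have hp : (0:ℝ) < u ^ (2 / α) := Real.rpow_pos_of_pos hu _
    have h1 : μ ^ 2 / Mtot * ((μ ^ 2) ^ (2 / α) / u ^ (2 / α)) ≤ α * u / ω ^ 2 := by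
      rwa [Real.div_rpow (by positivity) hu.le] at hIB
    have h4 : A ≤ α * u / ω ^ 2 * u ^ (2 / α) := by
      have h1' : μ ^ 2 / Mtot * (μ ^ 2) ^ (2 / α) / u ^ (2 / α) ≤ α * u / ω ^ 2 := by
        rw [mul_div_assoc]; exact h1
      rw [hAdef]
      exact (div_le_iff₀ hp).mp h1'
    have h5 : ω ^ 2 / α * A ≤ u * u ^ (2 / α) := by
      have h6 := mul_le_mul_of_nonneg_left h4 (le_of_lt (div_pos (pow_pos hω 2) hα0))
      refine h6.trans_eq ?_
      field_simp
    have h7 : (ω ^ 2 / α * A) ^ (α * β) ≤ (u * u ^ (2 / α)) ^ (α * β) :=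
      Real.rpow_le_rpow (by positivity) h5 hαβ.le
    have h8 : (u * u ^ (2 / α)) ^ (α * β) = u := by
      rw [show u * u ^ (2 / α) = u ^ ((1:ℝ) + 2 / α) by rw [Real.rpow_add hu, Real.rpow_one],
        ← Real.rpow_mul hu.le,
        show ((1:ℝ) + 2 / α) * (α * β) = 1 by rw [hβdef]; field_simp,
        Real.rpow_one]
    rw [Eomega_of_K hKq, ← hu_def]
    exact mul_le_mul_of_nonneg_left (h8 ▸ h7) hα22.le
  have part2 : Filter.Tendsto (fun ω => Estar α m ω) Filter.atTop Filter.atTop := by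
    have t1 : Filter.Tendsto (fun ω : ℝ => ω ^ 2 / α * A) Filter.atTop Filter.atTop :=
      ((Filter.tendsto_pow_atTop two_ne_zero).atTop_div_const hα0).atTop_mul_const hA0
    have t2 : Filter.Tendsto (fun ω : ℝ => (ω ^ 2 / α * A) ^ (α * β)) Filter.atTop Filter.atTop :=
      (tendsto_rpow_atTop hαβ).comp t1
    have t3 := t2.const_mul_atTop hα22
    refine Filter.tendsto_atTop_mono' Filter.atTop ?_ t3
    filter_upwards [Filter.eventually_gt_atTop 0] with ω hω
    rw [hEstar]
    exact le_csInf ⟨f ω, hwit ω hω⟩ (hLB ω hω)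
  refine ⟨part1, part2, ?_⟩
  intro x hodx hcomx c hc
  exact inertia_bound hN hα0 hm hodx hc

end
end NBodyPaper
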